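/- In the algebra U with K = f_{q^{1/2}}, the elements H = (2/(q^{-2}−q²))(K⁴ − 1), X = q^{-1/2} F K, Y = q^{-1/2} K E satisfy: q²HX − q^{-2}XH = 2X, q^{-2}HY − q²YH = −2Y, and q^{-1}XY − qYX = ((q+q^{-1})/2) H. -/

import Mathlib

/-!
The whole computation consists of moving powers of `K` past `E` and `F`: `K ^ 4` rescales `X = s⁻¹ • F K`
by `q⁻⁴` and `Y = s⁻¹ • K E` by `q⁴`, so the first two relations are twisted commutators with
`K ^ 4 - 1` whose coefficients are chosen to kill the `K ^ 4` terms. In the third, both `X Y`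
and `Y X` become multiples of `F E K²` and `E F K²`, which combine into `(E F - F E) K²`, and
`K'² K² = 1` turns `(K² - K'²) K²` into `K ^ 4 - 1`.
-/

section TwistedCommutation

variable {R A : Type*} [CommRing R] [Ring A] [Algebra R A]

theorem pow_mul_eq_smul_mul_pow {K F : A} {a : R} (h : K * F = a • (F * K)) (n : ℕ) :
    K ^ n * F = a ^ n • (F * K ^ n) := by
  induction n with
  | zero => simp
  | succ n ih =>
    calc K ^ (n + 1) * F = K ^ n * (K * F) := by rw [pow_succ, mul_assoc]
      _ = a • ((K ^ n * F) * K) := by rw [h, mul_smul_comm, mul_assoc]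
      _ = a ^ (n + 1) • (F * K ^ (n + 1)) := by
        rw [ih, smul_mul_assoc, smul_smul, mul_assoc, ← pow_succ, ← pow_succ']

theorem pow_mul_self_mul_eq_smul {K F : A} {a : R} (h : K * F = a • (F * K)) (n : ℕ) :
    K ^ n * (K * F) = a ^ n • ((K * F) * K ^ n) := by
  rw [← mul_assoc, ← pow_succ, pow_succ', mul_assoc, pow_mul_eq_smul_mul_pow h, mul_smul_comm,
    ← mul_assoc]

theorem pow_mul_mul_self_eq_smul {K F : A} {a : R} (h : K * F = a • (F * K)) (n : ℕ) :
    K ^ n * (F * K) = a ^ n • ((F * K) * K ^ n) := by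
  rw [← mul_assoc, pow_mul_eq_smul_mul_pow h, smul_mul_assoc, mul_assoc, mul_assoc,
    ← pow_succ, ← pow_succ']

theorem smul_mul_sub_smul_mul_smul_sub_one {T Z : A} {b α β : R} (c : R)
    (hTZ : T * Z = b • (Z * T)) (hb : α * b = β) :
    α • ((c • (T - 1)) * Z) - β • (Z * (c • (T - 1))) = (c * (β - α)) • Z := by
  rw [smul_mul_assoc, mul_smul_comm, sub_mul, mul_sub, one_mul, mul_one, hTZ, ← hb]
  module

end TwistedCommutation

section QuantumSL2

variable {k A : Type*} [Field k] [Ring A] [Algebra k A]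

theorem inv_smul_mul_sub_smul_mul {E F K : A} {q : k} (hq : q ≠ 0)
    (hKE : K * E = q • (E * K)) (hKF : K * F = q⁻¹ • (F * K)) :
    q⁻¹ • ((F * K) * (K * E)) - q • ((K * E) * (F * K)) = -(q • ((E * F - F * E) * K ^ 2)) := by
  have hFKKE : (F * K) * (K * E) = q ^ 2 • (F * E * K ^ 2) := by
    rw [mul_assoc, ← mul_assoc K, ← sq, pow_mul_eq_smul_mul_pow hKE, mul_smul_comm, mul_assoc]
  have hKEFK : (K * E) * (F * K) = E * F * K ^ 2 := by
    rw [hKE, smul_mul_assoc, mul_assoc, ← mul_assoc K, hKF, smul_mul_assoc, mul_smul_comm,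
      smul_smul, mul_inv_cancel₀ hq, one_smul, sq]
    noncomm_ring
  rw [hFKKE, hKEFK, smul_smul, sub_mul]
  match_scalars <;> field_simp

end QuantumSL2

theorem stmt14_general {A : Type*} [Ring A] [Algebra ℂ A]
    (q s : ℂ) (hs : s ^ 2 = q) (hq0 : q ≠ 0)
    (hroot : ∀ n : ℕ, 0 < n → q ^ n ≠ 1)
    (E F K K' : A)
    (hK'K : K' * K = 1)
    (hKE : K * E = q • (E * K)) (hKF : K * F = q⁻¹ • (F * K))
    (hEF : E * F - F * E = (q - q⁻¹)⁻¹ • (K ^ 2 - K' ^ 2)) :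
    let H := (2 * ((q ^ 2)⁻¹ - q ^ 2)⁻¹) • (K ^ 4 - 1)
    let X := s⁻¹ • (F * K)
    let Y := s⁻¹ • (K * E)
    (q ^ 2) • (H * X) - (q ^ 2)⁻¹ • (X * H) = (2 : ℂ) • X ∧
    (q ^ 2)⁻¹ • (H * Y) - (q ^ 2) • (Y * H) = (-2 : ℂ) • Y ∧
    q⁻¹ • (X * Y) - q • (Y * X) = ((q + q⁻¹) / 2) • H := by
  intro H X Y
  have hq4 : q ^ 4 ≠ 1 := hroot 4 four_pos
  have hd : (q ^ 2)⁻¹ - q ^ 2 ≠ 0 := by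
    intro h
    field_simp at h
    exact hq4 (by linear_combination -h)
  have hK4 : (K ^ 2 - K' ^ 2) * K ^ 2 = K ^ 4 - 1 := by
    rw [sub_mul, ← pow_add, sq K', sq K, mul_assoc, ← mul_assoc K' K, hK'K, one_mul, hK'K]
  refine ⟨?_, ?_, ?_⟩
  · rw [smul_mul_sub_smul_mul_smul_sub_one _
      (by rw [mul_smul_comm, pow_mul_mul_self_eq_smul hKF, smul_mul_assoc, smul_comm])
      (by field_simp)]
    rw [mul_assoc, inv_mul_cancel₀ hd, mul_one]
  · rw [smul_mul_sub_smul_mul_smul_sub_one _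
      (by rw [mul_smul_comm, pow_mul_self_mul_eq_smul hKE, smul_mul_assoc, smul_comm])
      (by field_simp)]
    rw [← neg_sub (q ^ 2)⁻¹ (q ^ 2), mul_neg, mul_assoc, inv_mul_cancel₀ hd, mul_one, neg_smul]
  · have hss : s⁻¹ * s⁻¹ = q⁻¹ := by rw [← hs, sq, mul_inv]
    calc q⁻¹ • (X * Y) - q • (Y * X)
        = q⁻¹ • (q⁻¹ • ((F * K) * (K * E)) - q • ((K * E) * (F * K))) := by
          simp only [X, Y, smul_mul_smul_comm, hss, smul_sub, smul_comm q q⁻¹]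
      _ = -(q - q⁻¹)⁻¹ • (K ^ 4 - 1) := by
          rw [inv_smul_mul_sub_smul_mul hq0 hKE hKF, hEF, smul_mul_assoc, hK4, smul_neg, smul_smul,
            inv_mul_cancel₀ hq0, one_smul, neg_smul]
      _ = ((q + q⁻¹) / 2) • H := by
          have hq2 : q ^ 2 - 1 ≠ 0 := fun h => hq4 (by linear_combination (q ^ 2 + 1) * h)
          have hq4' : 1 - q ^ 4 ≠ 0 := fun h => hq4 (by linear_combination -h)
          rw [smul_smul]
          congr 1
          field_simp
          ring

/-- In `U` with `K' = K⁻¹`, the elements `H = (2/(q⁻²−q²))(K⁴−1)`,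
`X = q^{−1/2}FK`, `Y = q^{−1/2}KE` satisfy the relations of calculus 9:
`q²HX − q⁻²XH = 2X`, `q⁻²HY − q²YH = −2Y`, `q⁻¹XY − qYX = ((q+q⁻¹)/2)H`. -/
theorem stmt14 {A : Type*} [Ring A] [Algebra ℂ A]
    (q s : ℂ) (hs : s ^ 2 = q) (hq0 : q ≠ 0)
    (hroot : ∀ n : ℕ, 0 < n → q ^ n ≠ 1)
    (E F K K' : A)
    (hKK' : K * K' = 1) (hK'K : K' * K = 1)
    (hKE : K * E = q • (E * K)) (hKF : K * F = q⁻¹ • (F * K))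
    (hEF : E * F - F * E = (q - q⁻¹)⁻¹ • (K ^ 2 - K' ^ 2)) :
    let H := (2 * ((q ^ 2)⁻¹ - q ^ 2)⁻¹) • (K ^ 4 - 1)
    let X := s⁻¹ • (F * K)
    let Y := s⁻¹ • (K * E)
    (q ^ 2) • (H * X) - (q ^ 2)⁻¹ • (X * H) = (2 : ℂ) • X ∧
    (q ^ 2)⁻¹ • (H * Y) - (q ^ 2) • (Y * H) = (-2 : ℂ) • Y ∧
    q⁻¹ • (X * Y) - q • (Y * X) = ((q + q⁻¹) / 2) • H :=
  stmt14_general q s hs hq0 hroot E F K K' hK'K hKE hKF hEF
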